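/- arXiv:1101.3929 — 7 statements merged into one kernel-verified Lean document; each statement's English description precedes it below -/
import Mathlib

section
/- In a BCJR-trellis with displacement matrix D defined by row l of D equal to Σ_{j=a_l}^{n-1} g_{lj} H_j (where (a_l, b_l] is a span of the l-th row of G and G H^T = 0), for every time index j and every row index l such that j is NOT in the span (a_l, b_l], the l-th row of the state matrix N_j is zero. -/
/-!
Unrolling the recursion, entry `(l, c)` of `N j` is `∑_{i ≥ a} f i + ∑_{i < j} f i` with
`f i = G l i * H c i`. Since `∑ f = 0` (from `G Hᵀ = 0`), this equals the sum of `f` over the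
circular interval `[a, j)`. For `j ∉ (a, b]` that interval is either empty (`j = a`) or contains
`[a, b]` and hence the whole support of `G l`, so the sum vanishes.
-/

open scoped Classical

/-- Circular half-open interval `(a, b]` in `ZMod n`. -/
def circIoc {n : ℕ} (a b : ZMod n) : Set (ZMod n) :=
  {x | 1 ≤ (x - a).val ∧ (x - a).val ≤ (b - a).val}

/-- Circular closed interval `[a, b]` in `ZMod n`. -/
def circIcc {n : ℕ} (a b : ZMod n) : Set (ZMod n) :=
  {x | (x - a).val ≤ (b - a).val}

/-- `(a, b]` is a span of the nonzero vector `c`. -/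
def IsSpan {n : ℕ} {F : Type*} [Field F] (c : ZMod n → F) (a b : ZMod n) : Prop :=
  c a ≠ 0 ∧ c b ≠ 0 ∧ ∀ j, c j ≠ 0 → j ∈ circIcc a b

namespace ZMod

variable {n : ℕ} [NeZero n]

theorem val_sub_of_lt {a b : ZMod n} (h : a.val < b.val) : (a - b).val = a.val + n - b.val := by
  have hba : b - a ≠ 0 := fun h0 => h.ne' (by rw [sub_eq_zero.mp h0])
  rw [← neg_sub, neg_val, if_neg hba, val_sub h.le]
  have := b.val_lt
  omega

theorem val_sub_eq_ite (a b : ZMod n) :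
    (a - b).val = if b.val ≤ a.val then a.val - b.val else a.val + n - b.val := by
  split_ifs with h
  · exact val_sub h
  · exact val_sub_of_lt (not_le.mp h)

end ZMod

def circIco {n : ℕ} (a b : ZMod n) : Set (ZMod n) :=
  {x | (x - a).val < (b - a).val}

section CircularSums

variable {n : ℕ} [NeZero n] {M : Type*}

theorem sum_circIco_eq_zero_of_notMem_circIoc [AddCommMonoid M] {f : ZMod n → M}
    {a b j : ZMod n} (hsum : ∑ i, f i = 0) (hsupp : ∀ i, f i ≠ 0 → i ∈ circIcc a b)
    (hj : j ∉ circIoc a b) :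
    ∑ i ∈ Finset.univ.filter (· ∈ circIco a j), f i = 0 := by
  simp only [circIoc, Set.mem_ofPred_eq, not_and, not_le] at hj
  rcases Nat.eq_zero_or_pos (j - a).val with hja | hja
  · refine Finset.sum_eq_zero fun i hi => ?_
    simp [circIco, hja] at hi
  · rw [Finset.sum_filter_of_ne (p := (· ∈ circIco a j))
      fun i _ hi => (hsupp i hi).trans_lt (hj hja), hsum]

/-- The indices `≥ a` together with those `< j` cover the circular interval `[a, j)` once, and
when `a ≤ j` also every index once more. -/
theorem ite_val_le_add_ite_val_lt [AddMonoid M] (x : M) (a i j : ZMod n) :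
    ((if a.val ≤ i.val then x else 0) + if i.val < j.val then x else 0) =
      (if i ∈ circIco a j then x else 0) + if a.val ≤ j.val then x else 0 := by
  have := a.val_lt
  have := i.val_lt
  have := j.val_lt
  simp only [circIco, Set.mem_ofPred_eq, ZMod.val_sub_eq_ite]
  split_ifs <;> first | omega | simp

theorem sum_val_ge_add_sum_val_lt [AddCommMonoid M] {f : ZMod n → M} (hsum : ∑ i, f i = 0)
    (a j : ZMod n) :
    ∑ i ∈ Finset.univ.filter (fun i : ZMod n => a.val ≤ i.val), f i +
        ∑ i ∈ Finset.univ.filter (fun i : ZMod n => i.val < j.val), f i =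
      ∑ i ∈ Finset.univ.filter (· ∈ circIco a j), f i := by
  simp only [Finset.sum_filter, ← Finset.sum_add_distrib, ite_val_le_add_ite_val_lt]
  rw [Finset.sum_add_distrib, Finset.sum_ite_irrel, hsum, Finset.sum_const_zero, ite_self, add_zero]

theorem sum_filter_val_lt_eq_sum_range [AddCommMonoid M] (f : ZMod n → M) {k : ℕ}
    (hk : k ≤ n) :
    ∑ i ∈ Finset.univ.filter (fun i : ZMod n => i.val < k), f i =
      ∑ m ∈ Finset.range k, f m := by
  refine Finset.sum_nbij' ZMod.val (fun m => (m : ZMod n)) ?_ ?_ ?_ ?_ ?_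
  · simp
  · intro m hm
    simp_all [ZMod.val_cast_of_lt (lt_of_lt_of_le (Finset.mem_range.mp hm) hk)]
  · simp
  · intro m hm
    exact ZMod.val_cast_of_lt (lt_of_lt_of_le (Finset.mem_range.mp hm) hk)
  · simp

theorem eq_add_sum_val_lt_of_forall_add_one [AddCommMonoid M] {u f : ZMod n → M}
    (hu : ∀ j, u (j + 1) = u j + f j) (j : ZMod n) :
    u j = u 0 + ∑ i ∈ Finset.univ.filter (fun i : ZMod n => i.val < j.val), f i := by
  have hrange : ∀ k : ℕ, u k = u 0 + ∑ m ∈ Finset.range k, f m := by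
    intro k
    induction k with
    | zero => simp
    | succ k ih => rw [Nat.cast_succ, hu, ih, Finset.sum_range_succ, add_assoc]
  rw [sum_filter_val_lt_eq_sum_range f j.val_lt.le, ← hrange, ZMod.natCast_zmod_val]

end CircularSums

/-- In a BCJR-trellis with displacement matrix `D` whose `l`-th row is
`Σ_{j=a_l}^{n-1} g_{lj} H_j`, where `(a_l, b_l]` is a span of the `l`-th row of `G`
and `G Hᵀ = 0`: for every time `j` outside the span `(a_l, b_l]`,
the `l`-th row of the state matrix `N_j` is zero. -/
theorem stmt2 (F : Type*) [Field F] (n r m : ℕ) [NeZero n]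
    (G : Matrix (Fin r) (ZMod n) F) (H : Matrix (Fin m) (ZMod n) F)
    (hGH : G * H.transpose = 0)
    (a b : Fin r → ZMod n)
    (hspan : ∀ l, IsSpan (G l) (a l) (b l))
    (N : ZMod n → Matrix (Fin r) (Fin m) F)
    (hN0 : ∀ l c, N 0 l c =
      ∑ j ∈ Finset.univ.filter (fun j : ZMod n => (a l).val ≤ j.val), G l j * H c j)
    (hNrec : ∀ j : ZMod n, N (j + 1) = N j + Matrix.of (fun l c => G l j * H c j))
    (j : ZMod n) (l : Fin r)
    (hj : j ∉ circIoc (a l) (b l)) :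
    N j l = 0 := by
  funext c
  set f : ZMod n → F := fun i => G l i * H c i
  have hsum : ∑ i, f i = 0 := by
    simpa [Matrix.mul_apply] using congrFun (congrFun hGH l) c
  have hsupp : ∀ i, f i ≠ 0 → i ∈ circIcc (a l) (b l) := fun i hi =>
    (hspan l).2.2 i (left_ne_zero_of_mul hi)
  have hstate : N j l c =
      N 0 l c + ∑ i ∈ Finset.univ.filter (fun i : ZMod n => i.val < j.val), f i :=
    eq_add_sum_val_lt_of_forall_add_one (u := fun k => N k l c) (fun k => by simp [hNrec, f]) j
  rw [Pi.zero_apply, hstate, hN0, sum_val_ge_add_sum_val_lt hsum]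
  exact sum_circIco_eq_zero_of_notMem_circIoc hsum hsupp hj
end

section
/- Let (X, T) be a characteristic pair of a k-dimensional code C ⊆ F^n with full support, where T = [(a_l, b_l], l = 1,...,n]. Then the rows of X whose spans are conventional (i.e., a_l < b_l as integers, equivalently the span does not contain 0) are exactly k in number and are linearly independent, hence form a basis of C. -/
open scoped Classical

/-!
A conventional span `(a, b]` does not wrap around `0`, so every entry in the support of its row
has value at least `a`: the conventional rows are in echelon form with pairwise distinct leading
positions `a_l`, hence linearly independent. Condition (iv) at `j = 0` says exactly `n - k` spans
are not conventional, so there are `k` conventional rows; being independent vectors of the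
`k`-dimensional code `C`, they span it.
-/

open Function

theorem ZMod.val_le_of_mem_circIcc {n : ℕ} [NeZero n] {a b j : ZMod n}
    (h0 : (0 : ZMod n) ∉ circIoc a b) (hj : j ∈ circIcc a b) : a.val ≤ j.val := by
  by_contra! hlt
  have ha : a ≠ 0 := by
    rintro rfl
    simp at hlt
  have haj : a - j ≠ 0 := sub_ne_zero.mpr fun h => hlt.ne (h ▸ rfl)
  have := NeZero.mk ha
  have := NeZero.mk haj
  -- If `j` comes before `a`, the offset `j - a` wraps around past the offset `0 - a` of `0`.
  have hval0 : (0 - a).val = n - a.val := by rw [zero_sub, ZMod.val_neg_of_ne_zero]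
  have hvalj : (j - a).val = n - (a.val - j.val) := by
    rw [← neg_sub, ZMod.val_neg_of_ne_zero, ZMod.val_sub hlt.le]
  simp only [circIoc, circIcc, Set.mem_ofPred_eq] at h0 hj
  have := a.val_lt
  omega

theorem linearIndependent_of_echelon {ι α R : Type*} [LinearOrder α] [Ring R] [NoZeroDivisors R]
    {v : ι → α → R} {lead : ι → α} (hinj : Injective lead) (hlead : ∀ i, v i (lead i) ≠ 0)
    (hsupp : ∀ i j, v i j ≠ 0 → lead i ≤ j) : LinearIndependent R v := by
  rw [linearIndependent_iff']
  intro s g hsum i hi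
  by_contra hgi
  obtain ⟨i₀, hi₀, hmin⟩ :=
    (s.filter (g · ≠ 0)).exists_min_image lead ⟨i, Finset.mem_filter.mpr ⟨hi, hgi⟩⟩
  simp only [Finset.mem_filter] at hi₀ hmin
  have hsingle : ∑ j ∈ s, g j * v j (lead i₀) = g i₀ * v i₀ (lead i₀) := by
    refine Finset.sum_eq_single_of_mem i₀ hi₀.1 fun j hj hne => ?_
    by_contra h
    obtain ⟨hg, hv⟩ := mul_ne_zero_iff.mp h
    exact hne (hinj (le_antisymm (hsupp j _ hv) (hmin j ⟨hj, hg⟩)))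
  have hzero := congrFun hsum (lead i₀)
  simp only [Finset.sum_apply, Pi.smul_apply, smul_eq_mul, Pi.zero_apply, hsingle] at hzero
  exact mul_ne_zero hi₀.2 (hlead i₀) hzero

theorem LinearIndependent.span_eq_of_card_eq_finrank {K V ι : Type*} [DivisionRing K]
    [AddCommGroup V] [Module K V] [Fintype ι] {C : Submodule K V} [FiniteDimensional K C]
    {v : ι → V} (hv : LinearIndependent K v) (hmem : ∀ i, v i ∈ C)
    (hcard : Fintype.card ι = Module.finrank K C) : Submodule.span K (Set.range v) = C :=
  Submodule.eq_of_le_of_finrank_eq (Submodule.span_le.mpr (Set.range_subset_iff.mpr hmem))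
    (by rw [finrank_span_eq_card hv, hcard])

theorem stmt4_general (F : Type*) [Field F] (n k : ℕ) [NeZero n] (hk : k ≤ n)
    (C : Submodule F (ZMod n → F)) (hdim : Module.finrank F C = k)
    (x : ZMod n → ZMod n → F) (a b : ZMod n → ZMod n)
    (hspanC : Submodule.span F (Set.range x) = C)
    (hspans : ∀ l, IsSpan (x l) (a l) (b l))
    (ha : Function.Injective a)
    (hcover : ∀ j : ZMod n,
      (Finset.univ.filter fun l => j ∈ circIoc (a l) (b l)).card = n - k) :
    (Finset.univ.filter fun l : ZMod n =>
        (0 : ZMod n) ∉ circIoc (a l) (b l)).card = k ∧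
    LinearIndependent F (fun l : ↑(Finset.univ.filter fun l : ZMod n =>
        (0 : ZMod n) ∉ circIoc (a l) (b l)) => x l.1) ∧
    Submodule.span F (Set.range fun l : ↑(Finset.univ.filter fun l : ZMod n =>
        (0 : ZMod n) ∉ circIoc (a l) (b l)) => x l.1) = C := by
  set S := Finset.univ.filter fun l : ZMod n => (0 : ZMod n) ∉ circIoc (a l) (b l)
  have hcard : S.card = k := by
    have hsplit := Finset.card_filter_add_card_filter_not (s := Finset.univ)
      fun l : ZMod n => (0 : ZMod n) ∈ circIoc (a l) (b l)
    rw [hcover 0, Finset.card_univ, ZMod.card] at hsplit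
    convert_to n - k + S.card = n at hsplit
    omega
  let _ : LinearOrder (ZMod n) := LinearOrder.lift' ZMod.val (ZMod.val_injective n)
  have hli : LinearIndependent F fun l : S => x l.1 :=
    linearIndependent_of_echelon (lead := fun l : S => a l.1) (ha.comp Subtype.val_injective)
      (fun l => (hspans l.1).1)
      fun l j hj => ZMod.val_le_of_mem_circIcc (Finset.mem_filter.mp l.2).2 ((hspans l.1).2.2 j hj)
  refine ⟨hcard, hli, hli.span_eq_of_card_eq_finrank ?_ (by simp [hcard, hdim])⟩
  exact fun l => hspanC ▸ Submodule.subset_span ⟨l.1, rfl⟩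

/-- Let `(X, T)` be a characteristic pair of a `k`-dimensional code `C ⊆ F^n`.
Then the rows of `X` whose spans are conventional (do not contain `0`) are exactly
`k` in number, are linearly independent, and form a basis of `C`. -/
theorem stmt4 (F : Type*) [Field F] (n k : ℕ) [NeZero n] (hk : k ≤ n)
    (C : Submodule F (ZMod n → F)) (hdim : Module.finrank F C = k)
    (x : ZMod n → ZMod n → F) (a b : ZMod n → ZMod n)
    (hspanC : Submodule.span F (Set.range x) = C)
    (hspans : ∀ l, IsSpan (x l) (a l) (b l))
    (ha : Function.Injective a) (hb : Function.Injective b)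
    (hcover : ∀ j : ZMod n,
      (Finset.univ.filter fun l => j ∈ circIoc (a l) (b l)).card = n - k) :
    (Finset.univ.filter fun l : ZMod n =>
        (0 : ZMod n) ∉ circIoc (a l) (b l)).card = k ∧
    LinearIndependent F (fun l : ↑(Finset.univ.filter fun l : ZMod n =>
        (0 : ZMod n) ∉ circIoc (a l) (b l)) => x l.1) ∧
    Submodule.span F (Set.range fun l : ↑(Finset.univ.filter fun l : ZMod n =>
        (0 : ZMod n) ∉ circIoc (a l) (b l)) => x l.1) = C :=
  stmt4_general F n k hk C hdim x a b hspanC hspans ha hcover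
end

section
/- (Conditioned code duality, linear version.) Let V and W be finite-dimensional F-vector spaces with non-degenerate bilinear pairing, P ⊆ V × F^n a subspace and R ⊆ V a subspace. Define the conditioned projection π(P | R) = { a ∈ F^n : ∃ v ∈ R, (v,a) ∈ P }. With the pairing on (V × F^n) × (W × F^n) given by ⟨(v,a),(w,b)⟩ = ⟨v,w⟩ + a·bᵀ, one has (π(P | R))^⊥ = π(P^⊥ | R^⊥), where ⊥ denotes the annihilator with respect to the relevant pairings. -/
open Module LinearMap

/-- `g` comes from factoring `(p, r) ↦ -β p.2` through `(p, r) ↦ p.1 + r` on `P × R`: the kernel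
of the latter consists of pairs with `p.1 ∈ R`, on which `β p.2` vanishes. -/
theorem Submodule.exists_coprod_mem_dualAnnihilator {K V U : Type*} [Field K]
    [AddCommGroup V] [Module K V] [AddCommGroup U] [Module K U]
    (P : Submodule K (V × U)) (R : Submodule K V) (β : Dual K U)
    (hβ : ∀ p ∈ P, p.1 ∈ R → β p.2 = 0) :
    ∃ g : Dual K V, g ∈ R.dualAnnihilator ∧ g.coprod β ∈ P.dualAnnihilator := by
  let f : (P × R) →ₗ[K] V := (LinearMap.fst K V U ∘ₗ P.subtype).coprod R.subtype
  let φ : Dual K (P × R) := -(β ∘ₗ LinearMap.snd K V U ∘ₗ P.subtype ∘ₗ LinearMap.fst K P R)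
  have hφ : φ ∈ (ker f).dualAnnihilator := by
    rw [Submodule.mem_dualAnnihilator]
    rintro ⟨⟨p, hp⟩, ⟨r, hr⟩⟩ hpr
    have hp1 : p.1 = -r := eq_neg_of_add_eq_zero_left hpr
    simp [φ, hβ p hp (hp1 ▸ R.neg_mem hr)]
  rw [← range_dualMap_eq_dualAnnihilator_ker] at hφ
  obtain ⟨g, hg⟩ := hφ
  refine ⟨g, (Submodule.mem_dualAnnihilator _).2 fun v hv => ?_,
    (Submodule.mem_dualAnnihilator _).2 fun p hp => ?_⟩
  · simpa [f, φ] using LinearMap.congr_fun hg (0, ⟨v, hv⟩)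
  · simpa [f, φ, add_eq_zero_iff_eq_neg] using LinearMap.congr_fun hg (⟨p, hp⟩, 0)

theorem stmt7_general (F V W : Type*) [Field F]
    [AddCommGroup V] [Module F V] [AddCommGroup W] [Module F W]
    [FiniteDimensional F V]
    (n : ℕ)
    (B : V →ₗ[F] W →ₗ[F] F)
    (hBl : ∀ v, (∀ w, B v w = 0) → v = 0)
    (hBr : ∀ w, (∀ v, B v w = 0) → w = 0)
    (P : Submodule F (V × (Fin n → F))) (R : Submodule F V) :
    {b : Fin n → F | ∀ a ∈ {a : Fin n → F | ∃ v ∈ R, (v, a) ∈ P},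
        ∑ i, a i * b i = 0}
      = {b : Fin n → F | ∃ w, (∀ v ∈ R, B v w = 0) ∧
          ∀ p ∈ P, B p.1 w + ∑ i, p.2 i * b i = 0} := by
  have hB : B.IsPerfPair := .of_injective
    (ker_eq_bot.1 (separatingLeft_iff_ker_eq_bot.1 hBl))
    (ker_eq_bot.1 (separatingRight_iff_flip_ker_eq_bot.1 hBr))
  ext b
  constructor
  · intro hb
    obtain ⟨g, hgR, hgP⟩ := P.exists_coprod_mem_dualAnnihilator R
      ((dotProductBilin F F).flip b) fun p hp hp1 => hb p.2 ⟨p.1, hp1, hp⟩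
    obtain ⟨w, rfl⟩ := (IsPerfPair.bijective_right B).2 g
    rw [Submodule.mem_dualAnnihilator] at hgR hgP
    exact ⟨w, hgR, fun p hp => by simpa [dotProduct] using hgP p hp⟩
  · rintro ⟨w, hwR, hwP⟩ a ⟨v, hv, hva⟩
    simpa [hwR v hv] using hwP _ hva

/-- Conditioned code duality (linear version): with a non-degenerate pairing
`B : V × W → F`, subspaces `P ⊆ V × F^n` and `R ⊆ V`, and
`π(P|R) = {a : ∃ v ∈ R, (v,a) ∈ P}`, one has `(π(P|R))^⊥ = π(P^⊥|R^⊥)`,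
where annihilators are taken with respect to
`⟨(v,a),(w,b)⟩ = ⟨v,w⟩ + Σ_i a_i b_i`. -/
theorem stmt7 (F V W : Type*) [Field F]
    [AddCommGroup V] [Module F V] [AddCommGroup W] [Module F W]
    [FiniteDimensional F V] [FiniteDimensional F W]
    (n : ℕ)
    (B : V →ₗ[F] W →ₗ[F] F)
    (hBl : ∀ v, (∀ w, B v w = 0) → v = 0)
    (hBr : ∀ w, (∀ v, B v w = 0) → w = 0)
    (hdim : Module.finrank F V = Module.finrank F W)
    (P : Submodule F (V × (Fin n → F))) (R : Submodule F V) :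
    {b : Fin n → F | ∀ a ∈ {a : Fin n → F | ∃ v ∈ R, (v, a) ∈ P},
        ∑ i, a i * b i = 0}
      = {b : Fin n → F | ∃ w, (∀ v ∈ R, B v w = 0) ∧
          ∀ p ∈ P, B p.1 w + ∑ i, p.2 i * b i = 0} :=
  stmt7_general F V W n B hBl hBr P R
end

section
/- Let T = T_{(G,H,S)} be a KV-trellis (G ∈ F^{k×n} of rank k with rows having characteristic spans (a_l,b_l] of C) with state matrices N_j. If j = b_l for some l, then the j-th row H_j of H^T satisfies H_j = −g_{lj}^{−1} · row(N_j, l), where g_{lj} ≠ 0 is the entry of the l-th row of G at position j. -/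
open scoped Classical

/-!
Fix a column `c` of `Hᵀ` and put `t_j = g_{lj} H_{cj}`. Then `∑ t = 0` since `g_l Hᵀ = 0`, and `t` is
supported on the circular interval `[a_l, b_l]`. Unrolling the recursion up to `b_l + 1` gives
`N_{b_l} + t_{b_l} = ∑_{a_l ≤ j} t_j + ∑_{j ≤ b_l} t_j`. If `a_l ≤ b_l` both sums are the full sum;
if the span wraps around, the two ranges split the support. Either way the total is `0`.
-/

theorem ZMod.val_sub_of_lt_s8 {n : ℕ} [NeZero n] {a b : ZMod n} (h : a.val < b.val) :
    (a - b).val = a.val + n - b.val := by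
  rcases lt_or_ge ((a - b).val + b.val) n with hlt | hge
  · have := ZMod.val_add_of_lt hlt
    rw [sub_add_cancel] at this
    omega
  · have := ZMod.val_add_of_le hge
    rw [sub_add_cancel] at this
    omega

section circIcc

variable {n : ℕ} [NeZero n] {a b j : ZMod n}

theorem ZMod.val_sub_eq (x a : ZMod n) :
    (x - a).val = if a.val ≤ x.val then x.val - a.val else x.val + n - a.val := by
  split_ifs with h
  · exact ZMod.val_sub h
  · exact ZMod.val_sub_of_lt_s8 (not_le.mp h)

theorem val_mem_Icc_of_mem_circIcc (hab : a.val ≤ b.val) (hj : j ∈ circIcc a b) :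
    a.val ≤ j.val ∧ j.val ≤ b.val := by
  have := ZMod.val_lt j
  have := ZMod.val_lt b
  replace hj : (j - a).val ≤ (b - a).val := hj
  rw [ZMod.val_sub_eq, ZMod.val_sub_eq, if_pos hab] at hj
  split_ifs at hj <;> omega

theorem le_val_or_val_le_of_mem_circIcc (hab : b.val < a.val) (hj : j ∈ circIcc a b) :
    a.val ≤ j.val ∨ j.val ≤ b.val := by
  have := ZMod.val_lt j
  have := ZMod.val_lt a
  replace hj : (j - a).val ≤ (b - a).val := hj
  rw [ZMod.val_sub_eq, ZMod.val_sub_eq, if_neg hab.not_ge] at hj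
  split_ifs at hj <;> omega

end circIcc

theorem sum_val_ge_add_sum_val_le_eq_zero {n : ℕ} [NeZero n] {M : Type*} [AddCommMonoid M]
    {t : ZMod n → M} {a b : ZMod n} (hsupp : ∀ j, t j ≠ 0 → j ∈ circIcc a b)
    (hsum : ∑ j, t j = 0) :
    ∑ j with a.val ≤ j.val, t j + ∑ j with j.val ≤ b.val, t j = 0 := by
  rcases le_or_gt a.val b.val with hab | hab
  · rw [Finset.sum_filter_of_ne fun j _ hj => (val_mem_Icc_of_mem_circIcc hab (hsupp j hj)).1,
      Finset.sum_filter_of_ne fun j _ hj => (val_mem_Icc_of_mem_circIcc hab (hsupp j hj)).2,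
      hsum, add_zero]
  · -- on the support, `j.val ≤ b.val` is the complement of `a.val ≤ j.val`
    have hcompl : ∑ j with j.val ≤ b.val, t j = ∑ j with ¬a.val ≤ j.val, t j := by
      rw [Finset.sum_filter, Finset.sum_filter]
      refine Finset.sum_congr rfl fun j _ => ?_
      by_cases hj : t j = 0
      · simp [hj]
      · have := le_val_or_val_le_of_mem_circIcc hab (hsupp j hj)
        congr 1
        apply propext
        omega
    rw [hcompl, Finset.sum_filter_add_sum_filter_not, hsum]

theorem eq_add_sum_range_of_forall_succ {n : ℕ} {M : Type*} [AddCommMonoid M]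
    {N f : ZMod n → M} (hN : ∀ j, N (j + 1) = N j + f j) (i : ℕ) :
    N i = N 0 + ∑ i' ∈ Finset.range i, f i' := by
  induction i with
  | zero => simp
  | succ i ih => rw [Nat.cast_succ, hN, ih, Finset.sum_range_succ, add_assoc]

theorem ZMod.sum_range_natCast {n : ℕ} [NeZero n] {M : Type*} [AddCommMonoid M]
    (f : ZMod n → M) {i : ℕ} (hi : i ≤ n) :
    ∑ i' ∈ Finset.range i, f i' = ∑ j with j.val < i, f j := by
  refine Finset.sum_nbij' (fun i' => (i' : ZMod n)) ZMod.val ?_ ?_ ?_ ?_ fun _ _ => rfl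
  · intro i' hi'
    simp only [Finset.mem_range, Finset.mem_filter, Finset.mem_univ, true_and] at hi' ⊢
    rwa [ZMod.val_cast_of_lt (by omega)]
  · intro j hj
    simpa using hj
  · intro i' hi'
    simp only [Finset.mem_range] at hi'
    exact ZMod.val_cast_of_lt (by omega)
  · intro j _
    exact ZMod.natCast_zmod_val j

theorem stmt8_general (F : Type*) [Field F] (n k m : ℕ) [NeZero n]
    (G : Matrix (Fin k) (ZMod n) F) (H : Matrix (Fin m) (ZMod n) F)
    (hGH : G * H.transpose = 0)
    (a b : Fin k → ZMod n)
    (hspan : ∀ l, IsSpan (G l) (a l) (b l))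
    (N : ZMod n → Matrix (Fin k) (Fin m) F)
    (hN0 : ∀ l c, N 0 l c =
      ∑ j ∈ Finset.univ.filter (fun j : ZMod n => (a l).val ≤ j.val), G l j * H c j)
    (hNrec : ∀ j : ZMod n, N (j + 1) = N j + Matrix.of (fun l c => G l j * H c j))
    (l : Fin k) :
    ∀ c, H c (b l) = -(G l (b l))⁻¹ * N (b l) l c := by
  intro c
  have hsum : ∑ j, G l j * H c j = 0 := by
    simpa [Matrix.mul_apply] using congrFun (congrFun hGH l) c
  have hsupp : ∀ j, G l j * H c j ≠ 0 → j ∈ circIcc (a l) (b l) :=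
    fun j hj => (hspan l).2.2 j (left_ne_zero_of_mul hj)
  have hrec : ∀ j, N (j + 1) l c = N j l c + G l j * H c j := fun j => by simp [hNrec]
  have hunroll : N (b l) l c + G l (b l) * H c (b l) =
      N 0 l c + ∑ j with j.val ≤ (b l).val, G l j * H c j := by
    have hb := eq_add_sum_range_of_forall_succ (N := fun j => N j l c)
      (f := fun j => G l j * H c j) hrec ((b l).val + 1)
    rw [ZMod.sum_range_natCast (fun j => G l j * H c j) (ZMod.val_lt (b l)), Nat.cast_succ,
      ZMod.natCast_zmod_val, hrec] at hb
    simpa only [Nat.lt_succ_iff] using hb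
  have hkey : G l (b l) * H c (b l) = -N (b l) l c := by
    rw [eq_neg_iff_add_eq_zero, add_comm, hunroll, hN0,
      sum_val_ge_add_sum_val_le_eq_zero hsupp hsum]
  rw [neg_mul, ← mul_neg, eq_inv_mul_iff_mul_eq₀ (hspan l).2.1, hkey]

/-- In a KV-trellis `T_{(G,H,S)}` (rows of `G` have characteristic spans of
`C = ker Hᵀ`) with BCJR state matrices `N_j`: if `j = b_l`, then the `j`-th row
`H_j` of `Hᵀ` satisfies `H_j = −g_{lj}⁻¹ · row(N_j, l)`. -/
theorem stmt8 (F : Type*) [Field F] (n k m : ℕ) [NeZero n]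
    (G : Matrix (Fin k) (ZMod n) F) (H : Matrix (Fin m) (ZMod n) F)
    (hGH : G * H.transpose = 0) (hG : G.rank = k) (hH : H.rank = m)
    (a b : Fin k → ZMod n)
    (hspan : ∀ l, IsSpan (G l) (a l) (b l))
    (ha : Function.Injective a) (hb : Function.Injective b)
    (hchar : ∀ l, ∀ c : ZMod n → F, (∀ i, ∑ j, c j * H i j = 0) → c ≠ 0 →
      ∀ b', IsSpan c (a l) b' → (b l - a l).val ≤ (b' - a l).val)
    (N : ZMod n → Matrix (Fin k) (Fin m) F)
    (hN0 : ∀ l c, N 0 l c =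
      ∑ j ∈ Finset.univ.filter (fun j : ZMod n => (a l).val ≤ j.val), G l j * H c j)
    (hNrec : ∀ j : ZMod n, N (j + 1) = N j + Matrix.of (fun l c => G l j * H c j))
    (l : Fin k) :
    ∀ c, H c (b l) = -(G l (b l))⁻¹ * N (b l) l c :=
  stmt8_general F n k m G H hGH a b hspan N hN0 hNrec l
end

section
/- (Dual characteristic spans are reversed.) Under the identification of characteristic spans via the greedy/shortest-span property: if (a,b] is a characteristic span of C (the shortest span of a nonzero codeword of C starting at a), then (b,a] is a characteristic span of the dual code C^⊥; more precisely, the multiset of characteristic spans of C^⊥ equals { (b_l, a_l] : l = 1,...,n } where {(a_l,b_l]} are the characteristic spans of C. -/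
open Matrix

theorem dotProduct_eq_sum_of_support_inter_subset {R ι : Type*} [NonUnitalNonAssocSemiring R]
    [Fintype ι] {c y : ι → R} (s : Finset ι) (h : ∀ j, c j ≠ 0 → y j ≠ 0 → j ∈ s) :
    c ⬝ᵥ y = ∑ j ∈ s, c j * y j := by
  refine (Finset.sum_subset (Finset.subset_univ s) fun j _ hj => ?_).symm
  by_contra hne
  exact hj (h j (left_ne_zero_of_mul hne) (right_ne_zero_of_mul hne))

section DualCode

variable {F ι : Type*} [Field F] [Fintype ι]

theorem mem_of_forall_dotProduct_eq_zero (U : Submodule F (ι → F)) (x : ι → F)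
    (h : ∀ y, (∀ u ∈ U, u ⬝ᵥ y = 0) → x ⬝ᵥ y = 0) : x ∈ U := by
  classical
  rw [← Subspace.dualAnnihilator_dualCoannihilator_eq (W := U), Submodule.mem_dualCoannihilator]
  intro φ hφ
  obtain ⟨y, rfl⟩ := (dotProductEquiv F ι).surjective φ
  rw [Submodule.mem_dualAnnihilator] at hφ
  simpa [dotProduct_comm y] using h y fun u hu => by simpa [dotProduct_comm y] using hφ u hu

theorem exists_mem_dual_apply_ne_zero_support_subset {C D : Submodule F (ι → F)}
    (hD : ∀ y, y ∈ D ↔ ∀ c ∈ C, c ⬝ᵥ y = 0) {T : Set ι} {b : ι} (hb : b ∈ T)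
    (hC : ∀ c ∈ C, Function.support c ⊆ insert b Tᶜ → c b = 0) :
    ∃ y ∈ D, y b ≠ 0 ∧ Function.support y ⊆ T := by
  classical
  by_contra! hno
  let W : Submodule F (ι → F) := Submodule.pi T fun _ => (⊥ : Submodule F F)
  have hW : ∀ w ∈ W, ∀ j ∈ T, w j = 0 := fun w hw j hj =>
    (Submodule.mem_bot F).mp (Submodule.mem_pi.mp hw j hj)
  have hsingle : (Pi.single b 1 : ι → F) ∈ C ⊔ W := by
    refine mem_of_forall_dotProduct_eq_zero _ _ fun y hy => ?_
    have hyD : y ∈ D := (hD y).mpr fun c hc => hy c (Submodule.mem_sup_left hc)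
    have hyT : Function.support y ⊆ T := by
      intro j hj
      by_contra hjT
      have hjW : (Pi.single j 1 : ι → F) ∈ W := Submodule.mem_pi.mpr fun i hi =>
        (Submodule.mem_bot F).mpr (Pi.single_eq_of_ne (fun (h : i = j) => hjT (h ▸ hi)) 1)
      exact hj (by simpa using hy _ (Submodule.mem_sup_right hjW))
    rw [single_one_dotProduct]
    by_contra hyb
    exact hno y hyD hyb hyT
  obtain ⟨c, hcC, w, hwW, hcw⟩ := Submodule.mem_sup.mp hsingle
  have hc : c = Pi.single b 1 - w := eq_sub_of_add_eq hcw
  have hcb : c b = 1 := by simp [hc, hW w hwW b hb]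
  refine one_ne_zero (hcb ▸ hC c hcC fun j hj => ?_)
  by_cases hjb : j = b
  · exact Or.inl hjb
  · refine Or.inr fun hjT => hj ?_
    simp [hc, hW w hwW j hjT, hjb]

end DualCode

namespace ZMod

variable {n : ℕ} [NeZero n]

theorem val_sub_add_val_sub (x y z : ZMod n) :
    (x - y).val + (y - z).val = (x - z).val ∨ (x - y).val + (y - z).val = (x - z).val + n := by
  have hsum : (x - z).val = ((x - y).val + (y - z).val) % n := by
    rw [← ZMod.val_add, sub_add_sub_cancel]
  have hx := (x - y).val_lt
  have hy := (y - z).val_lt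
  rcases lt_or_ge ((x - y).val + (y - z).val) n with h | h
  · rw [Nat.mod_eq_of_lt h] at hsum
    exact Or.inl hsum.symm
  · rw [Nat.mod_eq_sub_mod h, Nat.mod_eq_of_lt (by omega)] at hsum
    exact Or.inr (by omega)

theorem val_sub_add_val_sub_of_ne {a b : ZMod n} (hab : a ≠ b) :
    (a - b).val + (b - a).val = n := by
  have h1 : (a - b).val ≠ 0 := by rwa [Ne, ZMod.val_eq_zero, sub_eq_zero]
  have h2 : (b - a).val ≠ 0 := by rwa [Ne, ZMod.val_eq_zero, sub_eq_zero, eq_comm]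
  have := val_sub_add_val_sub a b a
  rw [sub_self, ZMod.val_zero] at this
  omega

theorem eq_of_val_sub_eq_val_sub {a j b : ZMod n} (h : (j - a).val = (b - a).val) : j = b :=
  sub_left_injective (ZMod.val_injective n h)

end ZMod

section CircularInterval

variable {n : ℕ} {a b j : ZMod n}

theorem left_mem_circIcc : a ∈ circIcc a b := by
  simp [circIcc]

theorem right_mem_circIcc : b ∈ circIcc a b :=
  show (b - a).val ≤ (b - a).val from le_rfl

variable [NeZero n]

theorem mem_circIcc_or_mem_circIcc (hab : a ≠ b) (j : ZMod n) :
    j ∈ circIcc a b ∨ j ∈ circIcc b a := by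
  have hjba := ZMod.val_sub_add_val_sub j b a
  have hn := ZMod.val_sub_add_val_sub_of_ne hab
  have := (j - a).val_lt
  have := (j - b).val_lt
  simp only [circIcc, Set.mem_ofPred_eq]
  omega

theorem eq_or_eq_of_mem_circIcc_of_mem_circIcc (hab : a ≠ b) (h₁ : j ∈ circIcc a b)
    (h₂ : j ∈ circIcc b a) : j = a ∨ j = b := by
  have hn := ZMod.val_sub_add_val_sub_of_ne hab
  simp only [circIcc, Set.mem_ofPred_eq] at h₁ h₂
  rcases ZMod.val_sub_add_val_sub j b a with h | h
  · exact Or.inr (ZMod.eq_of_val_sub_eq_val_sub (a := a) (by omega))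
  · left
    rw [← sub_eq_zero, ← ZMod.val_eq_zero]
    omega

theorem val_sub_lt_of_mem_circIcc (hj : j ∈ circIcc a b) (hjb : j ≠ b) :
    (j - a).val < (b - a).val :=
  lt_of_le_of_ne hj fun h => hjb (ZMod.eq_of_val_sub_eq_val_sub h)

end CircularInterval

section CharacteristicSpan

variable {F : Type*} [Field F] {n : ℕ}

def IsCharSpan (C : Submodule F (ZMod n → F)) (a b : ZMod n) : Prop :=
  (∃ c ∈ C, c ≠ 0 ∧ IsSpan c a b) ∧
    ∀ c ∈ C, c ≠ 0 → ∀ b', IsSpan c a b' → (b - a).val ≤ (b' - a).val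

variable {C D : Submodule F (ZMod n → F)} {a b : ZMod n}

theorem IsCharSpan.exists_apply_ne_zero (h : IsCharSpan C a b) : ∃ c ∈ C, c a ≠ 0 :=
  let ⟨c, hc, _, hca, _⟩ := h.1
  ⟨c, hc, hca⟩

variable [NeZero n]

theorem exists_isSpan_val_sub_le {c : ZMod n → F} (ha : c a ≠ 0) {m : ℕ}
    (hm : ∀ j, c j ≠ 0 → (j - a).val ≤ m) : ∃ b, IsSpan c a b ∧ (b - a).val ≤ m := by
  classical
  obtain ⟨b, hb, hmax⟩ := Finset.exists_max_image
    (Finset.univ.filter fun j => c j ≠ 0) (fun j => (j - a).val) ⟨a, by simp [ha]⟩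
  simp only [Finset.mem_filter, Finset.mem_univ, true_and] at hb hmax
  exact ⟨b, ⟨ha, hb, hmax⟩, hm b hb⟩

theorem IsCharSpan.val_sub_le (h : IsCharSpan C a b) {c : ZMod n → F} (hc : c ∈ C)
    (ha : c a ≠ 0) {m : ℕ} (hm : ∀ j, c j ≠ 0 → (j - a).val ≤ m) :
    (b - a).val ≤ m := by
  obtain ⟨b', hspan, hb'⟩ := exists_isSpan_val_sub_le ha hm
  exact (h.2 c hc (fun h0 => ha (congrFun h0 a)) b' hspan).trans hb'

theorem IsCharSpan.eq {b' : ZMod n} (h₁ : IsCharSpan C a b) (h₂ : IsCharSpan C a b') :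
    b = b' := by
  obtain ⟨c₁, hc₁, hc₁0, hspan₁⟩ := h₁.1
  obtain ⟨c₂, hc₂, hc₂0, hspan₂⟩ := h₂.1
  exact ZMod.eq_of_val_sub_eq_val_sub
    (le_antisymm (h₁.2 c₂ hc₂ hc₂0 b' hspan₂) (h₂.2 c₁ hc₁ hc₁0 b hspan₁))

theorem IsCharSpan.ne (h : IsCharSpan C a b) (hD : ∀ y, y ∈ D ↔ ∀ c ∈ C, c ⬝ᵥ y = 0)
    (hDa : ∃ y ∈ D, y a ≠ 0) : a ≠ b := by
  rintro rfl
  obtain ⟨c, hcC, -, hca, -, hcsupp⟩ := h.1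
  obtain ⟨y, hyD, hya⟩ := hDa
  have hsupp : ∀ j, c j ≠ 0 → j = a := fun j hj =>
    ZMod.eq_of_val_sub_eq_val_sub (le_antisymm (hcsupp j hj) (by simp))
  have hsum := (hD y).mp hyD c hcC
  rw [dotProduct_eq_sum_of_support_inter_subset {a} fun j hj _ =>
    Finset.mem_singleton.mpr (hsupp j hj), Finset.sum_singleton] at hsum
  exact mul_ne_zero hca hya hsum

-- `insert b (circIcc b a)ᶜ` is the arc `(a, b]`.
theorem IsCharSpan.apply_eq_zero (h : IsCharSpan C a b) (hab : a ≠ b) {c : ZMod n → F}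
    (hc : c ∈ C) (hsupp : Function.support c ⊆ insert b (circIcc b a)ᶜ) : c b = 0 := by
  by_contra hcb
  obtain ⟨c₀, hc₀C, -, hc₀a, -, hc₀supp⟩ := h.1
  have hca : c a = 0 := by
    by_contra hca
    rcases hsupp hca with h' | h'
    · exact hab h'
    · exact h' right_mem_circIcc
  have hcsupp : ∀ j, c j ≠ 0 → j ∈ circIcc a b := fun j hj =>
    (hsupp hj).elim (fun h' => h' ▸ right_mem_circIcc)
      fun h' => (mem_circIcc_or_mem_circIcc hab j).resolve_right h'
  set c' := c₀ - (c₀ b / c b) • c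
  have hc'C : c' ∈ C := C.sub_mem hc₀C (C.smul_mem _ hc)
  have hc'a : c' a ≠ 0 := by simpa [c', hca] using hc₀a
  have hc'b : c' b = 0 := by simp [c', hcb]
  have hc'supp : ∀ j, c' j ≠ 0 → (j - a).val ≤ (b - a).val - 1 := by
    intro j hj
    have hj' : c₀ j ≠ 0 ∨ c j ≠ 0 := by
      by_contra! h0
      simp [c', h0] at hj
    have hjI : j ∈ circIcc a b := hj'.elim (hc₀supp j) (hcsupp j)
    have := val_sub_lt_of_mem_circIcc hjI fun hjb => hj (hjb ▸ hc'b)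
    omega
  have := h.val_sub_le hc'C hc'a hc'supp
  have : 0 < (b - a).val := by
    simpa using val_sub_lt_of_mem_circIcc (left_mem_circIcc (b := b)) hab
  omega

theorem IsCharSpan.dual (h : IsCharSpan C a b) (hD : ∀ y, y ∈ D ↔ ∀ c ∈ C, c ⬝ᵥ y = 0)
    (hDa : ∃ y ∈ D, y a ≠ 0) : IsCharSpan D b a := by
  have hab := h.ne hD hDa
  obtain ⟨c₀, hc₀C, -, hc₀a, hc₀b, hc₀supp⟩ := h.1
  constructor
  · obtain ⟨y, hyD, hyb, hysupp⟩ := exists_mem_dual_apply_ne_zero_support_subset hD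
      left_mem_circIcc fun c hc hsupp => h.apply_eq_zero hab hc hsupp
    have hsum := (hD y).mp hyD c₀ hc₀C
    rw [dotProduct_eq_sum_of_support_inter_subset {a, b} fun j hj hj' => by
      simpa using eq_or_eq_of_mem_circIcc_of_mem_circIcc hab (hc₀supp j hj) (hysupp hj'),
      Finset.sum_pair hab] at hsum
    have hya : y a ≠ 0 := by
      intro hya
      simp [hya, hc₀b, hyb] at hsum
    exact ⟨y, hyD, fun h0 => hyb (congrFun h0 b), hyb, hya, fun j hj => hysupp hj⟩
  · rintro y hyD - b' ⟨hyb, -, hysupp⟩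
    by_contra! hlt
    have hsum := (hD y).mp hyD c₀ hc₀C
    rw [dotProduct_eq_sum_of_support_inter_subset {b} fun j hj hj' => by
      have hj'' : j ∈ circIcc b a := (hysupp j hj').trans hlt.le
      rcases eq_or_eq_of_mem_circIcc_of_mem_circIcc hab (hc₀supp j hj) hj'' with rfl | rfl
      · exact absurd (hysupp _ hj') hlt.not_ge
      · simp] at hsum
    simp [hc₀b, hyb] at hsum

end CharacteristicSpan

theorem stmt13_general (F : Type*) [Field F] (n : ℕ) [NeZero n]
    (C D : Submodule F (ZMod n → F))
    (hD : ∀ y, y ∈ D ↔ ∀ c ∈ C, ∑ j, c j * y j = 0)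
    (bC bD : ZMod n → ZMod n)
    (hbC : ∀ a, (∃ c ∈ C, c ≠ 0 ∧ IsSpan c a (bC a)) ∧
      ∀ c ∈ C, c ≠ 0 → ∀ b', IsSpan c a b' → (bC a - a).val ≤ (b' - a).val)
    (hbD : ∀ a, (∃ y ∈ D, y ≠ 0 ∧ IsSpan y a (bD a)) ∧
      ∀ y ∈ D, y ≠ 0 → ∀ b', IsSpan y a b' → (bD a - a).val ≤ (b' - a).val) :
    Function.Bijective bC ∧ ∀ a, bD (bC a) = a := by
  have hdual : ∀ a, bD (bC a) = a := fun a =>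
    have hCD : IsCharSpan D (bC a) a :=
      IsCharSpan.dual (hbC a) hD (IsCharSpan.exists_apply_ne_zero (hbD a))
    (hCD.eq (hbD (bC a))).symm
  have hinj : Function.Injective bC := fun a a' h => by rw [← hdual a, ← hdual a', h]
  exact ⟨Finite.injective_iff_bijective.mp hinj, hdual⟩

/-- Koetter–Vardy: the characteristic spans of the dual code are the reversed
characteristic spans of the code. With `bC a` (resp. `bD a`) the endpoint of the
characteristic (shortest) span of `C` (resp. of `C^⊥`) starting at `a`, the map
`bC` is a bijection and `bD (bC a) = a` for all `a`; i.e., the characteristic span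
list of `C^⊥` is `[(b_a, a] : a]` up to reordering. -/
theorem stmt13 (F : Type*) [Field F] (n : ℕ) [NeZero n]
    (C D : Submodule F (ZMod n → F))
    (hD : ∀ y, y ∈ D ↔ ∀ c ∈ C, ∑ j, c j * y j = 0)
    (hsuppC : ∀ j, ∃ c ∈ C, c j ≠ 0)
    (hsuppD : ∀ j, ∃ y ∈ D, y j ≠ 0)
    (bC bD : ZMod n → ZMod n)
    (hbC : ∀ a, (∃ c ∈ C, c ≠ 0 ∧ IsSpan c a (bC a)) ∧
      ∀ c ∈ C, c ≠ 0 → ∀ b', IsSpan c a b' → (bC a - a).val ≤ (b' - a).val)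
    (hbD : ∀ a, (∃ y ∈ D, y ≠ 0 ∧ IsSpan y a (bD a)) ∧
      ∀ y ∈ D, y ≠ 0 → ∀ b', IsSpan y a b' → (bD a - a).val ≤ (b' - a).val) :
    Function.Bijective bC ∧ ∀ a, bD (bC a) = a :=
  stmt13_general F n C D hD bC bD hbC hbD
end

section
/- (The dual codeword from the probing vector has the reversed span.) With v the unique vector satisfying G_0^T = Q_1 vᵀ as above, the dual codeword c := vH ∈ C^⊥ has span (0, a_0] and satisfies c_0 = 1; moreover Q_j vᵀ = 0 for all j ∉ (0, a_0]. -/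
open scoped Classical

/-!
Write `c = vH` and `f_j = Q_j vᵀ`. Since `Q_{j+1} = Q_j + (x_l(j) H_{·j})_l`, the vector `f` is
updated by `f_{j+1}(l) = f_j(l) + x_l(j) c_j`, and `f_0(l)` is the part of `⟨x_l, c⟩` over the
positions from `a_l` on. Every `x_l` is orthogonal to `c ∈ C^⊥`, so the generator with `a_l = 0`
turns `G_0ᵀ = Q_1 vᵀ` into `c_0 = 1`, after which `f_0 = 0`. Since `a` is a bijection, every
position `j > a_0` is the start of the span of some generator other than the excluded one, whose
tail sum from `j` on vanishes; by downward induction `c_j = 0` for `j > a_0`. Orthogonality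
against the excluded generator, supported on `[a_0, 0]`, then forces `c_{a_0} ≠ 0`, and `f`
stays constant, hence zero, from `a_0 + 1` round to `0`.
-/

open Matrix

lemma sum_mul_vecMul {R ι κ : Type*} [CommSemiring R] [Fintype ι] [Fintype κ] (s : Finset ι)
    (u : ι → R) (H : Matrix κ ι R) (v : κ → R) :
    ∑ c, (∑ j ∈ s, u j * H c j) * v c = ∑ j ∈ s, u j * (v ᵥ* H) j := by
  simp only [vecMul, dotProduct, Finset.sum_mul, Finset.mul_sum]
  rw [Finset.sum_comm]
  exact Finset.sum_congr rfl fun _ _ => Finset.sum_congr rfl fun _ _ => by ring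

section ZModPositions

variable {n : ℕ}

lemma mem_circIcc_zero_iff {a j : ZMod n} : j ∈ circIcc 0 a ↔ j.val ≤ a.val := by
  simp [circIcc]

lemma mem_circIoc_zero_iff {a j : ZMod n} : j ∈ circIoc 0 a ↔ 1 ≤ j.val ∧ j.val ≤ a.val := by
  simp [circIoc]

variable [NeZero n]

lemma ZMod.val_add_one_eq_mod (j : ZMod n) : (j + 1).val = (j.val + 1) % n := by
  rw [ZMod.val_add, ZMod.val_one_eq_one_mod, Nat.add_mod_mod]

lemma eq_zero_or_val_le_of_mem_circIcc_zero {a j : ZMod n} (ha : a ≠ 0)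
    (hj : j ∈ circIcc a 0) : j = 0 ∨ a.val ≤ j.val := by
  by_contra! h
  obtain ⟨hj0, hlt⟩ := h
  have hjpos : 0 < j.val := Nat.pos_of_ne_zero ((ZMod.val_ne_zero j).2 hj0)
  have hdiff : (a - j).val = a.val - j.val := ZMod.val_sub hlt.le
  have hdiff0 : a - j ≠ 0 := sub_ne_zero.2 fun h => by subst h; omega
  simp only [circIcc, Set.mem_ofPred_eq, zero_sub] at hj
  rw [← neg_sub a j, ZMod.neg_val, ZMod.neg_val, if_neg hdiff0, if_neg ha, hdiff] at hj
  have := a.val_lt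
  omega

lemma eq_zero_of_notMem_circIoc_zero {M : Type*} [Zero M] {f : ZMod n → M} {a : ZMod n}
    (h0 : f 0 = 0) (hstep : ∀ j, a.val < j.val → f (j + 1) = f j) :
    ∀ j ∉ circIoc 0 a, f j = 0 := by
  intro j hj
  rw [mem_circIoc_zero_iff, not_and_or, not_le, not_le, Nat.lt_one_iff, ZMod.val_eq_zero] at hj
  rcases hj with rfl | hj
  · exact h0
  induction hk : n - j.val generalizing j with
  | zero => have := j.val_lt; omega
  | succ k ih =>
    rw [← hstep j hj]
    have hval := ZMod.val_add_one_eq_mod j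
    rcases Nat.lt_or_ge (j.val + 1) n with hlt | hge
    · rw [Nat.mod_eq_of_lt hlt] at hval
      exact ih (j + 1) (by omega) (by omega)
    · have hwrap : j.val + 1 = n := by have := j.val_lt; omega
      rw [hwrap, Nat.mod_self, ZMod.val_eq_zero] at hval
      rwa [hval]

end ZModPositions

section DualCodeword

variable {F : Type*} [Field F] {n : ℕ} [NeZero n]

def tailSum (y c : ZMod n → F) (a : ZMod n) : F :=
  ∑ j ∈ Finset.univ.filter (fun j : ZMod n => a.val ≤ j.val), y j * c j

lemma tailSum_zero (y c : ZMod n → F) : tailSum y c 0 = y ⬝ᵥ c := by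
  simp [tailSum, dotProduct]

lemma eq_zero_of_tailSum_eq_zero {c : ZMod n → F} {a : ℕ}
    (h : ∀ j, a < j.val → ∃ y : ZMod n → F, y j ≠ 0 ∧ tailSum y c j = 0) :
    ∀ j, a < j.val → c j = 0 := by
  intro j hj
  induction hk : n - j.val using Nat.strong_induction_on generalizing j with
  | _ k ih =>
    obtain ⟨y, hyj, hy⟩ := h j hj
    have htail : tailSum y c j = y j * c j := by
      refine Finset.sum_eq_single_of_mem j (by simp) fun i hi hij => ?_
      have hle : j.val ≤ i.val := (Finset.mem_filter.mp hi).2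
      have hlt : j.val < i.val := lt_of_le_of_ne hle fun h => hij (ZMod.val_injective n h).symm
      rw [ih (n - i.val) (by have := i.val_lt; omega) i (by omega) rfl, mul_zero]
    rw [htail] at hy
    exact (mul_eq_zero.mp hy).resolve_left hyj

lemma apply_eq_zero_of_isSpan_self {y w : ZMod n → F} {a : ZMod n} (hy : IsSpan y a a)
    (horth : y ⬝ᵥ w = 0) : w a = 0 := by
  have hsupp : ∀ j, y j ≠ 0 → j = a := fun j hj => by
    have := hy.2.2 j hj
    simp only [circIcc, Set.mem_ofPred_eq, sub_self, ZMod.val_zero, Nat.le_zero,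
      ZMod.val_eq_zero, sub_eq_zero] at this
    exact this
  rw [dotProduct, Finset.sum_eq_single a (fun j _ hj => by
    rw [not_ne_iff.mp (mt (hsupp j) hj), zero_mul]) (by simp)] at horth
  exact (mul_eq_zero.mp horth).resolve_left hy.1

lemma apply_ne_zero_of_isSpan_zero {y c : ZMod n → F} {a : ZMod n} (ha : a ≠ 0)
    (hy : IsSpan y a 0) (horth : y ⬝ᵥ c = 0) (hc0 : c 0 ≠ 0)
    (hc : ∀ j, a.val < j.val → c j = 0) : c a ≠ 0 := by
  have hsum : y ⬝ᵥ c = y 0 * c 0 + y a * c a := by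
    refine Finset.sum_eq_add 0 a (Ne.symm ha) (fun j _ ⟨hj0, hja⟩ => ?_) (by simp) (by simp)
    by_contra hne
    rcases eq_zero_or_val_le_of_mem_circIcc_zero ha (hy.2.2 j (left_ne_zero_of_mul hne))
      with h | hle
    · exact hj0 h
    rcases hle.lt_or_eq with hlt | heq
    · exact right_ne_zero_of_mul hne (hc j hlt)
    · exact hja (ZMod.val_injective n heq).symm
  intro hca
  rw [hsum, hca, mul_zero, add_zero] at horth
  exact mul_ne_zero hy.2.1 hc0 horth

variable {x : ZMod n → ZMod n → F} {aa : ZMod n → ZMod n} {c : ZMod n → F}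

lemma apply_zero_eq_one (hx : ∀ l, x l (aa l) ≠ 0) (hsurj : Function.Surjective aa)
    (ha0 : aa 0 ≠ 0) (horth : ∀ l, x l ⬝ᵥ c = 0)
    (hprobe : ∀ l ≠ 0, tailSum (x l) c (aa l) + x l 0 * c 0 = x l 0) : c 0 = 1 := by
  obtain ⟨l, hl⟩ := hsurj 0
  have h := hprobe l fun h => ha0 (h ▸ hl)
  have hx0 : x l 0 ≠ 0 := hl ▸ hx l
  rw [hl, tailSum_zero, horth, zero_add] at h
  exact mul_left_cancel₀ hx0 (h.trans (mul_one _).symm)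

lemma apply_eq_zero_of_val_lt (hx : ∀ l, x l (aa l) ≠ 0) (hsurj : Function.Surjective aa)
    (htail : ∀ l ≠ 0, tailSum (x l) c (aa l) = 0) : ∀ j, (aa 0).val < j.val → c j = 0 := by
  refine eq_zero_of_tailSum_eq_zero fun j hj => ?_
  obtain ⟨l, rfl⟩ := hsurj j
  exact ⟨x l, hx l, htail l (by rintro rfl; exact lt_irrefl _ hj)⟩

end DualCodeword

theorem stmt15_general (F : Type*) [Field F] (n m : ℕ) [NeZero n]
    (H : Matrix (Fin m) (ZMod n) F)
    (x : ZMod n → ZMod n → F) (aa : ZMod n → ZMod n)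
    (hxC : ∀ l i, ∑ j, x l j * H i j = 0)
    (hspans : ∀ l : ZMod n, IsSpan (x l) (aa l) l)
    (ha : Function.Injective aa)
    (hsuppD : ∀ j : ZMod n, ∃ i, H i j ≠ 0)
    (Q : ZMod n → Matrix {l : ZMod n // l ≠ 0} (Fin m) F)
    (hQ0 : ∀ l c, Q 0 l c =
      ∑ j ∈ Finset.univ.filter (fun j : ZMod n => (aa l.1).val ≤ j.val), x l.1 j * H c j)
    (hQrec : ∀ j : ZMod n, Q (j + 1) = Q j + Matrix.of (fun l c => x l.1 j * H c j))
    (v : Fin m → F)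
    (hv : ∀ l : {l : ZMod n // l ≠ 0}, x l.1 0 = ∑ c, Q 1 l c * v c) :
    IsSpan (fun j => ∑ i, v i * H i j) (0 : ZMod n) (aa 0) ∧
    (∑ i, v i * H i 0) = 1 ∧
    (∀ j ∉ circIoc (0 : ZMod n) (aa 0), ∀ l, ∑ c, Q j l c * v c = 0) := by
  have horth : ∀ l, x l ⬝ᵥ (v ᵥ* H) = 0 := fun l => by
    rw [dotProduct, ← sum_mul_vecMul]
    simp [hxC]
  have ha0 : aa 0 ≠ 0 := fun h0 => (hsuppD 0).elim fun i hi =>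
    hi (apply_eq_zero_of_isSpan_self (by simpa [h0] using hspans 0) (hxC 0 i))
  have hstep : ∀ j l, (Q (j + 1) *ᵥ v) l = (Q j *ᵥ v) l + x l.1 j * (v ᵥ* H) j :=
    fun j l => by
      rw [hQrec, add_mulVec, Pi.add_apply]
      simpa [mulVec, dotProduct] using sum_mul_vecMul {j} (x l.1) H v
  have hstart : ∀ l, (Q 0 *ᵥ v) l = tailSum (x l.1) (v ᵥ* H) (aa l.1) := fun l => by
    simp only [mulVec, dotProduct, hQ0]
    exact sum_mul_vecMul _ _ H v
  have hprobe : ∀ l : {l : ZMod n // l ≠ 0},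
      tailSum (x l.1) (v ᵥ* H) (aa l.1) + x l.1 0 * (v ᵥ* H) 0 = x l.1 0 := fun l => by
    rw [← hstart, ← hstep, zero_add]
    exact (hv l).symm
  have hsurj := Finite.surjective_of_injective ha
  have hx : ∀ l, x l (aa l) ≠ 0 := fun l => (hspans l).1
  have hc0 : (v ᵥ* H) 0 = 1 :=
    apply_zero_eq_one hx hsurj ha0 horth fun l hl => hprobe ⟨l, hl⟩
  have hc : ∀ j, (aa 0).val < j.val → (v ᵥ* H) j = 0 :=
    apply_eq_zero_of_val_lt hx hsurj fun l hl => by simpa [hc0] using hprobe ⟨l, hl⟩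
  refine ⟨⟨hc0.trans_ne one_ne_zero,
    apply_ne_zero_of_isSpan_zero ha0 (hspans 0) (horth 0) (hc0.trans_ne one_ne_zero) hc,
    fun j hj => mem_circIcc_zero_iff.2 (not_lt.1 fun hlt => hj (hc j hlt))⟩, hc0, ?_⟩
  intro j hj l
  refine eq_zero_of_notMem_circIoc_zero (f := fun j => (Q j *ᵥ v) l)
    (by simpa [hc0, hstart] using hprobe l) (fun i hi => ?_) j hj
  rw [hstep, hc i hi, mul_zero, add_zero]

/-- The dual codeword produced by the probing vector has the reversed span:
with `v` the unique vector satisfying `G_0ᵀ = Q_1 vᵀ`, the dual codeword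
`c := vH ∈ C^⊥` has span `(0, a_0]` and `c_0 = 1`; moreover `Q_j vᵀ = 0` for all
`j ∉ (0, a_0]`. -/
theorem stmt15 (F : Type*) [Field F] (n k m : ℕ) [NeZero n] (hkm : k + m = n)
    (H : Matrix (Fin m) (ZMod n) F) (hH : H.rank = m)
    (x : ZMod n → ZMod n → F) (aa : ZMod n → ZMod n)
    (hxC : ∀ l i, ∑ j, x l j * H i j = 0)
    (hspanC : Submodule.span F (Set.range x)
      = LinearMap.ker H.transpose.vecMulLinear)
    (hspans : ∀ l : ZMod n, IsSpan (x l) (aa l) l)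
    (ha : Function.Injective aa)
    (hcover : ∀ j : ZMod n,
      (Finset.univ.filter fun l => j ∈ circIoc (aa l) l).card = m)
    (hsuppC : ∀ j : ZMod n, ∃ c ∈ LinearMap.ker H.transpose.vecMulLinear, c j ≠ 0)
    (hsuppD : ∀ j : ZMod n, ∃ i, H i j ≠ 0)
    (Q : ZMod n → Matrix {l : ZMod n // l ≠ 0} (Fin m) F)
    (hQ0 : ∀ l c, Q 0 l c =
      ∑ j ∈ Finset.univ.filter (fun j : ZMod n => (aa l.1).val ≤ j.val), x l.1 j * H c j)
    (hQrec : ∀ j : ZMod n, Q (j + 1) = Q j + Matrix.of (fun l c => x l.1 j * H c j))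
    (v : Fin m → F)
    (hv : ∀ l : {l : ZMod n // l ≠ 0}, x l.1 0 = ∑ c, Q 1 l c * v c) :
    IsSpan (fun j => ∑ i, v i * H i j) (0 : ZMod n) (aa 0) ∧
    (∑ i, v i * H i 0) = 1 ∧
    (∀ j ∉ circIoc (0 : ZMod n) (aa 0), ∀ l, ∑ c, Q j l c * v c = 0) :=
  stmt15_general F n m H x aa hxC hspans ha hsuppD Q hQ0 hQrec v hv
end

section
/- (Uniqueness of the common past vector in the proof of trivial state-space intersection.) Let N_j ∈ F^{k×(n−k)}, j ∈ ZMod n, satisfy N_{j+1} = N_j + G_jᵀ H_j with all H_j ≠ 0, where row(N_j,l) = 0 for j ∉ (a_l,b_l] and the rows {row(N_j,l) : j ∈ (a_l,b_l]} are linearly independent for each j, and suppose for every j either (i) H_j ∉ im N_j, or (ii) j = b_m for a unique m and H_j ∈ span(row(N_j,m)). If w ∈ F^{n−k} satisfies w = α_j N_j for every j (with some α_j ∈ F^k), then there is a single α ∈ F^k with w = α N_j for all j, namely α = (α_{b_1,1},...,α_{b_k,k}). -/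
open scoped Classical

/-!
Write `u_l` for the rows of `N_j` and `u'_l = u_l + G_{l j} H_j` for those of `N_{j+1}`.
From `w = α_j N_j = α_{j+1} N_{j+1}` we get `∑ (α_{j,l} - α_{j+1,l}) u_l = c H_j` with
`c = ∑ α_{j+1,l} G_{l j}`. By the dichotomy this vector lies in the span of the rows `u_m`
with `b_m = j` (in case (i) it lies in the row space of `N_j` while `H_j` does not, so
`c = 0`), and independence of the active rows gives `α_{j,l} = α_{j+1,l}` for every active
row `l` with `b_l ≠ j`. Walking forward from `j` to `b_l` inside `(a_l, b_l]` then shows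
`α_{j,l} = α_{b_l,l}`, and inactive rows of `N_j` vanish.
-/

section CircularInterval

variable {n : ℕ} [NeZero n] {a b : ZMod n}

lemma val_sub_lt_of_mem_circIoc {j : ZMod n} (hj : j ∈ circIoc a b) (hjb : j ≠ b) :
    (j - a).val < (b - a).val :=
  hj.2.lt_of_ne fun h => hjb (by simpa using ZMod.val_injective n h)

lemma val_add_one_sub_of_mem_circIoc {j : ZMod n} (hj : j ∈ circIoc a b) (hjb : j ≠ b) :
    (j + 1 - a).val = (j - a).val + 1 := by
  have hlt := val_sub_lt_of_mem_circIoc hj hjb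
  have hba := ZMod.val_lt (b - a)
  rw [add_sub_right_comm, ZMod.val_add, ZMod.val_one_eq_one_mod, Nat.add_mod_mod,
    Nat.mod_eq_of_lt (by omega)]

lemma add_one_mem_circIoc {j : ZMod n} (hj : j ∈ circIoc a b) (hjb : j ≠ b) :
    j + 1 ∈ circIoc a b := by
  have hlt := val_sub_lt_of_mem_circIoc hj hjb
  refine ⟨?_, ?_⟩ <;> rw [val_add_one_sub_of_mem_circIoc hj hjb] <;> omega

theorem circIoc_induction {P : ZMod n → Prop} (hb : P b)
    (hstep : ∀ j ∈ circIoc a b, j ≠ b → P (j + 1) → P j) : ∀ j ∈ circIoc a b, P j := by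
  suffices ∀ d, ∀ j ∈ circIoc a b, (b - a).val - (j - a).val = d → P j from
    fun j hj => this _ j hj rfl
  intro d
  induction d with
  | zero =>
    intro j hj hd
    have hj_eq : j = b := by
      simpa using ZMod.val_injective n (show (j - a).val = (b - a).val by have := hj.2; omega)
    exact hj_eq ▸ hb
  | succ d ih =>
    intro j hj hd
    have hjb : j ≠ b := by rintro rfl; omega
    refine hstep j hj hjb (ih _ (add_one_mem_circIoc hj hjb) ?_)
    rw [val_add_one_sub_of_mem_circIoc hj hjb]
    omega

end CircularInterval

section RowIndependence

variable {ι R V : Type*} [AddCommGroup V]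
  {u : ι → V} {p : ι → Prop}

lemma coeff_eq_zero_of_sum_smul_eq_zero [Fintype ι] [Ring R] [Module R V]
    (hli : LinearIndependent R fun i : {i // p i} => u i) (hzero : ∀ i, ¬p i → u i = 0)
    {d : ι → R} (hd : ∑ i, d i • u i = 0) {i : ι} (hi : p i) : d i = 0 := by
  have hsub : ∑ i : {i // p i}, d i • u i = 0 := by
    rw [← hd, ← Fintype.sum_subtype_add_sum_subtype p,
      Fintype.sum_eq_zero (fun i : {i // ¬p i} => d i • u i)
        fun i => by rw [hzero i i.2, smul_zero], add_zero]
  exact Fintype.linearIndependent_iff.mp hli (fun i => d i) hsub ⟨i, hi⟩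

lemma coeff_eq_zero_of_sum_smul_mem_span_image [Fintype ι] [Ring R] [Module R V]
    (hli : LinearIndependent R fun i : {i // p i} => u i) (hzero : ∀ i, ¬p i → u i = 0)
    {T : Set ι} {d : ι → R} (hd : ∑ i, d i • u i ∈ Submodule.span R (u '' T))
    {i : ι} (hi : p i) (hiT : i ∉ T) : d i = 0 := by
  obtain ⟨e, he, hsum⟩ := Finsupp.mem_span_image_iff_linearCombination R |>.mp hd
  rw [Finsupp.linearCombination_apply,
    Finsupp.sum_fintype _ _ fun _ => by simp only [zero_smul]] at hsum
  have hdiff : ∑ i, (d i - e i) • u i = 0 := by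
    simp only [sub_smul, Finset.sum_sub_distrib, hsum, sub_self]
  simpa [(Finsupp.mem_supported' R e).mp he i hiT] using
    coeff_eq_zero_of_sum_smul_eq_zero hli hzero hdiff hi

lemma smul_mem_span_image_of_dichotomy [DivisionRing R] [Module R V] {T : Set ι} {h : V}
    (hdich : h ∉ Submodule.span R (Set.range u) ∨ ∃ m ∈ T, ∃ t : R, h = t • u m)
    {c : R} (hc : c • h ∈ Submodule.span R (Set.range u)) :
    c • h ∈ Submodule.span R (u '' T) := by
  rcases hdich with hh | ⟨m, hm, t, rfl⟩
  · obtain rfl : c = 0 := by_contra fun hc0 => hh ((Submodule.smul_mem_iff _ hc0).mp hc)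
    rw [zero_smul]
    exact Submodule.zero_mem _
  · rw [smul_smul]
    exact Submodule.smul_mem _ _ (Submodule.subset_span ⟨m, hm, rfl⟩)

lemma coeff_eq_of_sum_smul_eq_sum_smul_add [Fintype ι] [DivisionRing R] [Module R V]
    (hli : LinearIndependent R fun i : {i // p i} => u i) (hzero : ∀ i, ¬p i → u i = 0)
    {T : Set ι} {h : V}
    (hdich : h ∉ Submodule.span R (Set.range u) ∨ ∃ m ∈ T, ∃ t : R, h = t • u m)
    {g α β : ι → R} (hrep : ∑ i, α i • u i = ∑ i, β i • (u i + g i • h))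
    {i : ι} (hi : p i) (hiT : i ∉ T) : α i = β i := by
  have hdiff : ∑ i, (α i - β i) • u i = (∑ i, β i * g i) • h := by
    simp only [sub_smul, Finset.sum_sub_distrib, hrep, smul_add, Finset.sum_add_distrib,
      Finset.sum_smul, mul_smul]
    abel
  have hmem : (∑ i, β i * g i) • h ∈ Submodule.span R (Set.range u) :=
    hdiff ▸ Submodule.sum_mem _ fun i _ => Submodule.smul_mem _ _ (Submodule.subset_span ⟨i, rfl⟩)
  refine sub_eq_zero.mp (coeff_eq_zero_of_sum_smul_mem_span_image hli hzero
    (d := fun i => α i - β i) ?_ hi hiT)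
  rw [hdiff]
  exact smul_mem_span_image_of_dichotomy hdich hmem

end RowIndependence

theorem stmt19_general (F : Type*) [Field F] (n k m : ℕ) [NeZero n]
    (a b : Fin k → ZMod n)
    (G : Matrix (Fin k) (ZMod n) F)
    (Hv : ZMod n → Fin m → F)
    (N : ZMod n → Matrix (Fin k) (Fin m) F)
    (hNrec : ∀ j : ZMod n, N (j + 1) = N j + Matrix.of (fun l c => G l j * Hv j c))
    (hzero : ∀ j l, j ∉ circIoc (a l) (b l) → N j l = 0)
    (hind : ∀ j : ZMod n, LinearIndependent F
      (fun l : {l : Fin k // j ∈ circIoc (a l) (b l)} => N j l.1))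
    (hdich : ∀ j : ZMod n,
      (Hv j ∉ Submodule.span F (Set.range (N j))) ∨
      ∃ l, b l = j ∧ ∃ t : F, Hv j = t • N j l)
    (w : Fin m → F) (α : ZMod n → Fin k → F)
    (hα : ∀ j c, w c = ∑ l, α j l * N j l c) :
    ∀ j c, (∑ l, α (b l) l * N j l c) = w c := by
  have hrow : ∀ j l, N (j + 1) l = N j l + G l j • Hv j := fun j l => by
    funext c
    simp [hNrec]
  have hw : ∀ j, ∑ l, α j l • N j l = w := fun j => by
    funext c
    simp [Finset.sum_apply, hα j c]
  have hstep : ∀ l, ∀ j ∈ circIoc (a l) (b l), j ≠ b l → α j l = α (j + 1) l := by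
    intro l j hj hjb
    have hrep : ∑ l, α j l • N j l = ∑ l, α (j + 1) l • (N j l + G l j • Hv j) := by
      simp only [← hrow, hw]
    exact coeff_eq_of_sum_smul_eq_sum_smul_add (hind j) (hzero j) (T := {l' | b l' = j})
      (hdich j) hrep hj (Ne.symm hjb)
  have hglue : ∀ l, ∀ j ∈ circIoc (a l) (b l), α j l = α (b l) l := fun l =>
    circIoc_induction rfl fun j hj hjb h => (hstep l j hj hjb).trans h
  intro j c
  rw [hα j c]
  refine Finset.sum_congr rfl fun l _ => ?_
  by_cases hl : j ∈ circIoc (a l) (b l)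
  · rw [hglue l j hl]
  · simp [hzero j l hl]

/-- Gluing step in the proof that the state spaces intersect trivially: if
`w = α_j N_j` for every time `j`, then the single vector `α` with entries
`α_{b_l, l}` satisfies `w = α N_j` for all `j`. -/
theorem stmt19 (F : Type*) [Field F] (n k m : ℕ) [NeZero n]
    (a b : Fin k → ZMod n)
    (ha : Function.Injective a) (hb : Function.Injective b)
    (G : Matrix (Fin k) (ZMod n) F)
    (hspan : ∀ l, IsSpan (G l) (a l) (b l))
    (Hv : ZMod n → Fin m → F) (hHv : ∀ j, Hv j ≠ 0)
    (N : ZMod n → Matrix (Fin k) (Fin m) F)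
    (hNrec : ∀ j : ZMod n, N (j + 1) = N j + Matrix.of (fun l c => G l j * Hv j c))
    (hzero : ∀ j l, j ∉ circIoc (a l) (b l) → N j l = 0)
    (hind : ∀ j : ZMod n, LinearIndependent F
      (fun l : {l : Fin k // j ∈ circIoc (a l) (b l)} => N j l.1))
    (hdich : ∀ j : ZMod n,
      (Hv j ∉ Submodule.span F (Set.range (N j))) ∨
      ∃ l, b l = j ∧ ∃ t : F, Hv j = t • N j l)
    (w : Fin m → F) (α : ZMod n → Fin k → F)
    (hα : ∀ j c, w c = ∑ l, α j l * N j l c) :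
    ∀ j c, (∑ l, α (b l) l * N j l c) = w c :=
  stmt19_general F n k m a b G Hv N hNrec hzero hind hdich w α hα
end
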